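/- For all integers w, t, and I (with no further conditions), the recurrence Q(w, t+1, I, 0) = Q(w, t, I, 0) + Q(w, t, I, 1) holds. -/
import Mathlib


/-- The generalized binomial coefficient `C(a,b)` for integers `a`, `b`:
`C(a,b) = 0` if `b < 0`, and `C(a,b) = a(a-1)⋯(a-b+1)/b!` if `b ≥ 0`. -/
noncomputable def binom (a b : ℤ) : ℤ := if b < 0 then 0 else Ring.choose a b.toNat

/-- The integer `Q(w,t,I,α)` from Definition 3.1 of the paper (intended for `0 ≤ α`). -/
noncomputable def Q (w t I α : ℤ) : ℤ :=
  if α = 0 then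
    -(∑ᶠ i : ℤ, binom (I - 1) (w - i) * binom (i + I - w - 2) i * binom t (I - i))
    + (∑ᶠ i ∈ Set.Iic w,
        ((i + w + 1).negOnePow : ℤ) * binom (2 * i - w - 2 + t) (2 * i - w - 1) * binom t (I - i))
    + (∑ᶠ i ∈ Set.Iic w,
        ((i + w).negOnePow : ℤ) * binom (t + i - 1) i * binom t (I - i))
  else
    -(∑ᶠ i : ℤ, binom (I - 1) (w - i) * binom (i + I - w - 2) i * binom t (I - i - α))
    + (∑ᶠ i ∈ Set.Iic w,
        ((i + w + 1 + α).negOnePow : ℤ) * binom (2 * i - w - 2 + t + α) (2 * i - w - 1 + α) *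
          binom t (I - i - α))
    + (∑ i ∈ Finset.Icc (1 : ℤ) (α - 1),
        ((i + 1).negOnePow : ℤ) * binom (I - 1) (w + i) * binom (t + w + i) (I - α + i))

lemma binom_of_neg {a b : ℤ} (h : b < 0) : binom a b = 0 := if_pos h

lemma binom_pascal (a b : ℤ) : binom (a + 1) b = binom a b + binom a (b - 1) := by
  rcases lt_trichotomy b 0 with h | h | h
  · rw [binom_of_neg h, binom_of_neg h, binom_of_neg (by omega)]; ring
  · subst h
    simp [binom, binom_of_neg (show (0:ℤ)-1 < 0 by omega), Ring.choose_zero_right]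
  · have h1 : ¬ (b < 0) := by omega
    have h2 : ¬ (b - 1 < 0) := by omega
    have h3 : b.toNat = (b-1).toNat + 1 := by omega
    rw [binom, binom, binom, if_neg h1, if_neg h1, if_neg h2, h3, Ring.choose_succ_succ]
    ring

lemma finsum_Iic_eq_sum (f : ℤ → ℤ) (w L : ℤ) (h : ∀ i, i < L → f i = 0) :
    ∑ᶠ i ∈ Set.Iic w, f i = ∑ i ∈ Finset.Icc L w, f i := by
  apply finsum_mem_eq_sum_of_inter_support_eq
  ext i
  simp only [Set.mem_inter_iff, Set.mem_Iic, Function.mem_support, Finset.coe_Icc, Set.mem_Icc]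
  constructor
  · rintro ⟨hiw, hfi⟩
    refine ⟨⟨?_, hiw⟩, hfi⟩
    by_contra hc
    exact hfi (h i (by omega))
  · rintro ⟨⟨_, hiw⟩, hfi⟩; exact ⟨hiw, hfi⟩

lemma finsum_eq_sum_Icc (f : ℤ → ℤ) (a b : ℤ) (h : ∀ i, i < a ∨ b < i → f i = 0) :
    ∑ᶠ i, f i = ∑ i ∈ Finset.Icc a b, f i := by
  apply finsum_eq_sum_of_support_subset
  intro i hi
  simp only [Finset.coe_Icc, Set.mem_Icc]
  by_contra hc
  exact hi (h i (by omega))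

lemma telescope (f : ℤ → ℤ) (L : ℤ) : ∀ w, L - 1 ≤ w →
    ∑ i ∈ Finset.Icc L w, (f i - f (i + 1)) = f L - f (w + 1) := by
  refine Int.le_induction ?_ ?_
  · rw [Finset.Icc_eq_empty (by omega), Finset.sum_empty]
    rw [show L - 1 + 1 = L by ring]; ring
  · intro n hn ih
    have hins : Finset.Icc L (n + 1) = insert (n + 1) (Finset.Icc L n) := by
      ext x; simp only [Finset.mem_Icc, Finset.mem_insert]; omega
    rw [hins, Finset.sum_insert (by simp only [Finset.mem_Icc]; omega), ih]
    ring

noncomputable def Gf (w t I j : ℤ) : ℤ :=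
  ((j + w).negOnePow : ℤ) *
    (binom (t + j - 1) (j - 1) - binom (2 * j - w - 2 + t) (2 * j - w - 2)) * binom t (I - j)

lemma key (w t I i : ℤ) :
    ((i + w + 1).negOnePow : ℤ) * binom (2 * i - w - 2 + (t + 1)) (2 * i - w - 1) *
        binom (t + 1) (I - i)
      + ((i + w).negOnePow : ℤ) * binom (t + 1 + i - 1) i * binom (t + 1) (I - i)
    = (((i + w + 1).negOnePow : ℤ) * binom (2 * i - w - 2 + t) (2 * i - w - 1) * binom t (I - i)
      + ((i + w).negOnePow : ℤ) * binom (t + i - 1) i * binom t (I - i)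
      + ((i + w + 1 + 1).negOnePow : ℤ) * binom (2 * i - w - 2 + t + 1) (2 * i - w - 1 + 1) *
          binom t (I - i - 1))
      + (Gf w t I i - Gf w t I (i + 1)) := by
  unfold Gf
  have p1 : binom (t + 1) (I - i) = binom t (I - i) + binom t (I - i - 1) := binom_pascal t (I - i)
  have p2 : binom (2 * i - w - 2 + (t + 1)) (2 * i - w - 1)
      = binom (2 * i - w - 2 + t) (2 * i - w - 1) + binom (2 * i - w - 2 + t) (2 * i - w - 2) := by
    rw [show 2 * i - w - 2 + (t + 1) = (2 * i - w - 2 + t) + 1 by ring, binom_pascal,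
      show 2 * i - w - 1 - 1 = 2 * i - w - 2 by ring]
  have p3 : binom (t + 1 + i - 1) i = binom (t + i - 1) i + binom (t + i - 1) (i - 1) := by
    rw [show t + 1 + i - 1 = (t + i - 1) + 1 by ring, binom_pascal]
  have p4 : binom (2 * i - w - 2 + t + 1) (2 * i - w - 1 + 1)
      = binom (2 * i - w - 2 + t) (2 * i - w) + binom (2 * i - w - 2 + t) (2 * i - w - 1) := by
    rw [show 2 * i - w - 1 + 1 = 2 * i - w by ring,
      show 2 * i - w - 2 + t + 1 = (2 * i - w - 2 + t) + 1 by ring, binom_pascal,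
      show 2 * i - w - 1 = 2 * i - w - 1 by ring]
  have p5 : binom (t + (i + 1) - 1) (i + 1 - 1) = binom (t + i - 1) i + binom (t + i - 1) (i - 1) := by
    rw [show t + (i + 1) - 1 = (t + i - 1) + 1 by ring, show i + 1 - 1 = i by ring, binom_pascal]
  have p6 : binom (2 * (i + 1) - w - 2 + t) (2 * (i + 1) - w - 2)
      = binom (2 * i - w - 2 + t) (2 * i - w) + 2 * binom (2 * i - w - 2 + t) (2 * i - w - 1)
        + binom (2 * i - w - 2 + t) (2 * i - w - 2) := by
    rw [show 2 * (i + 1) - w - 2 + t = ((2 * i - w - 2 + t) + 1) + 1 by ring,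
      show 2 * (i + 1) - w - 2 = 2 * i - w by ring, binom_pascal, binom_pascal, binom_pascal,
      show 2 * i - w - 1 - 1 = 2 * i - w - 2 by ring]
    ring
  have p7 : binom t (I - (i + 1)) = binom t (I - i - 1) := by
    rw [show I - (i + 1) = I - i - 1 by ring]
  have s1 : ((i + w + 1).negOnePow : ℤ) = -((i + w).negOnePow : ℤ) := by
    rw [Int.negOnePow_succ]; push_cast; ring
  have s2 : ((i + w + 1 + 1).negOnePow : ℤ) = ((i + w).negOnePow : ℤ) := by
    rw [Int.negOnePow_succ, Int.negOnePow_succ]; push_cast; ring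
  have s3 : ((i + 1 + w).negOnePow : ℤ) = -((i + w).negOnePow : ℤ) := by
    rw [show i + 1 + w = (i + w) + 1 by ring, Int.negOnePow_succ]; push_cast; ring
  rw [p1, p2, p3, p4, p5, p6, p7, s1, s2, s3]
  ring

theorem Q_recurrence_alpha_zero (w t I : ℤ) :
    Q w (t + 1) I 0 = Q w t I 0 + Q w t I 1 := by
  rw [Q, Q, Q, if_pos rfl, if_pos rfl, if_neg one_ne_zero]
  rw [finsum_eq_sum_Icc
      (fun i => binom (I - 1) (w - i) * binom (i + I - w - 2) i * binom (t + 1) (I - i)) 0 I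
      (by
        rintro i (hi | hi)
        · simp [binom_of_neg (show i < 0 by omega)]
        · simp [binom_of_neg (show I - i < 0 by omega)]),
    finsum_eq_sum_Icc
      (fun i => binom (I - 1) (w - i) * binom (i + I - w - 2) i * binom t (I - i)) 0 I
      (by
        rintro i (hi | hi)
        · simp [binom_of_neg (show i < 0 by omega)]
        · simp [binom_of_neg (show I - i < 0 by omega)]),
    finsum_eq_sum_Icc
      (fun i => binom (I - 1) (w - i) * binom (i + I - w - 2) i * binom t (I - i - 1)) 0 I
      (by
        rintro i (hi | hi)
        · simp [binom_of_neg (show i < 0 by omega)]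
        · simp [binom_of_neg (show I - i - 1 < 0 by omega)]),
    finsum_Iic_eq_sum
      (fun i => ((i + w + 1).negOnePow : ℤ) * binom (2 * i - w - 2 + (t + 1)) (2 * i - w - 1) *
        binom (t + 1) (I - i)) w (min 0 w)
      (by
        intro i hi
        simp [binom_of_neg (show 2 * i - w - 1 < 0 by omega)]),
    finsum_Iic_eq_sum
      (fun i => ((i + w).negOnePow : ℤ) * binom (t + 1 + i - 1) i * binom (t + 1) (I - i))
      w (min 0 w)
      (by
        intro i hi
        simp [binom_of_neg (show i < 0 by omega)]),
    finsum_Iic_eq_sum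
      (fun i => ((i + w + 1).negOnePow : ℤ) * binom (2 * i - w - 2 + t) (2 * i - w - 1) *
        binom t (I - i)) w (min 0 w)
      (by
        intro i hi
        simp [binom_of_neg (show 2 * i - w - 1 < 0 by omega)]),
    finsum_Iic_eq_sum
      (fun i => ((i + w).negOnePow : ℤ) * binom (t + i - 1) i * binom t (I - i)) w (min 0 w)
      (by
        intro i hi
        simp [binom_of_neg (show i < 0 by omega)]),
    finsum_Iic_eq_sum
      (fun i => ((i + w + 1 + 1).negOnePow : ℤ) * binom (2 * i - w - 2 + t + 1) (2 * i - w - 1 + 1) *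
        binom t (I - i - 1)) w (min 0 w)
      (by
        intro i hi
        simp [binom_of_neg (show 2 * i - w - 1 + 1 < 0 by omega), binom_of_neg (show 2 * i - w < 0 by omega)])]
  have hemp : Finset.Icc (1:ℤ) (1 - 1) = ∅ := Finset.Icc_eq_empty (by norm_num)
  rw [hemp, Finset.sum_empty]
  have hGL : Gf w t I (min 0 w) = 0 := by
    unfold Gf
    rw [binom_of_neg (show min 0 w - 1 < 0 by omega),
      binom_of_neg (show 2 * min 0 w - w - 2 < 0 by omega)]
    ring
  have hGw1 : Gf w t I (w + 1) = 0 := by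
    unfold Gf
    rw [show t + (w + 1) - 1 = t + w by ring, show w + 1 - 1 = w by ring,
      show 2 * (w + 1) - w - 2 + t = t + w by ring, show 2 * (w + 1) - w - 2 = w by ring,
      sub_self]
    ring
  have hA : (∑ i ∈ Finset.Icc (0:ℤ) I,
        binom (I - 1) (w - i) * binom (i + I - w - 2) i * binom (t + 1) (I - i))
      = (∑ i ∈ Finset.Icc (0:ℤ) I,
          binom (I - 1) (w - i) * binom (i + I - w - 2) i * binom t (I - i))
        + (∑ i ∈ Finset.Icc (0:ℤ) I,
          binom (I - 1) (w - i) * binom (i + I - w - 2) i * binom t (I - i - 1)) := by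
    rw [← Finset.sum_add_distrib]
    refine Finset.sum_congr rfl fun i _ => ?_
    rw [binom_pascal t (I - i)]
    ring
  have hBD : (∑ i ∈ Finset.Icc (min 0 w) w,
        ((i + w + 1).negOnePow : ℤ) * binom (2 * i - w - 2 + (t + 1)) (2 * i - w - 1) *
          binom (t + 1) (I - i))
      + (∑ i ∈ Finset.Icc (min 0 w) w,
          ((i + w).negOnePow : ℤ) * binom (t + 1 + i - 1) i * binom (t + 1) (I - i))
      = (∑ i ∈ Finset.Icc (min 0 w) w,
          ((i + w + 1).negOnePow : ℤ) * binom (2 * i - w - 2 + t) (2 * i - w - 1) * binom t (I - i))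
        + (∑ i ∈ Finset.Icc (min 0 w) w,
          ((i + w).negOnePow : ℤ) * binom (t + i - 1) i * binom t (I - i))
        + (∑ i ∈ Finset.Icc (min 0 w) w,
          ((i + w + 1 + 1).negOnePow : ℤ) * binom (2 * i - w - 2 + t + 1) (2 * i - w - 1 + 1) *
            binom t (I - i - 1)) := by
    rw [← Finset.sum_add_distrib, ← Finset.sum_add_distrib, ← Finset.sum_add_distrib]
    rw [Finset.sum_congr rfl (fun i _ => key w t I i), Finset.sum_add_distrib,
      telescope (Gf w t I) (min 0 w) w (by omega), hGL, hGw1]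
    ring
  linarith [hA, hBD]
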